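/- Let W = (𝒫, n) be a well-defined Wilson loop diagram and let M be its matroid M(W). For every subset of propagators P ⊆ 𝒫, the set F(P) ∪ F₀ is a flat of M, where F(P) = V_P ∖ V_{𝒫∖P} and F₀ = Fin n ∖ V_𝒫. -/

import Mathlib

open Matroid Set

/-- The support of a propagator: its two endpoints and their cyclic successors. -/
def Vp (n : ℕ) [NeZero n] (p : Fin n × Fin n) : Set (Fin n) :=
  {p.1, p.1 + 1, p.2, p.2 + 1}

/-- The support of a set of propagators. -/
def VP (n : ℕ) [NeZero n] (P : Set (Fin n × Fin n)) : Set (Fin n) :=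
  ⋃ p ∈ P, Vp n p

/-- `propsOf n Ps S` is `Prop(S)`: the propagators of `Ps` whose support meets `S`. -/
def propsOf (n : ℕ) [NeZero n] (Ps : Set (Fin n × Fin n)) (S : Set (Fin n)) :
    Set (Fin n × Fin n) :=
  {p ∈ Ps | (Vp n p ∩ S).Nonempty}

/-- A Wilson loop diagram `(Ps, n)` is well defined if `|V_P| ≥ |P| + 3`
for every nonempty `P ⊆ Ps`. -/
def WellDefinedWLD (n : ℕ) [NeZero n] (Ps : Set (Fin n × Fin n)) : Prop :=
  ∀ P ⊆ Ps, P.Nonempty → P.ncard + 3 ≤ (VP n P).ncard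
/-- A circuit of a matroid: a minimal dependent set. -/
def Matroid.IsCircuitOf {α : Type*} (M : Matroid α) (C : Set α) : Prop :=
  M.Dep C ∧ ∀ D ⊂ C, ¬ M.Dep D

/-- A union of circuits (a cyclic set) of a matroid. -/
def Matroid.UnionOfCircuits {α : Type*} (M : Matroid α) (C : Set α) : Prop :=
  ∃ 𝒞 : Set (Set α), (∀ D ∈ 𝒞, M.IsCircuitOf D) ∧ C = ⋃₀ 𝒞

/-- A matroid is connected if its ground set is nonempty and any two elements of the
ground set are equal or lie on a common circuit. -/
def Matroid.Conn {α : Type*} (M : Matroid α) : Prop :=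
  M.E.Nonempty ∧ ∀ x ∈ M.E, ∀ y ∈ M.E, x = y ∨ ∃ C, M.IsCircuitOf C ∧ x ∈ C ∧ y ∈ C

/-- The rank of a set in a matroid: the maximal size of an independent subset. -/
noncomputable def Matroid.rk' {α : Type*} (M : Matroid α) (X : Set α) : ℕ :=
  sSup (Set.ncard '' {I | M.Indep I ∧ I ⊆ X})

/-- Contraction of a matroid by a set, defined via duality. -/
def Matroid.contractBy {α : Type*} (M : Matroid α) (C : Set α) : Matroid α :=
  (M✶ ↾ (M.E \ C))✶

/-- The propagator flat `F(P)`: vertices supporting only propagators in `P`. -/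
def FP (n : ℕ) [NeZero n] (Ps P : Set (Fin n × Fin n)) : Set (Fin n) :=
  VP n P \ VP n (Ps \ P)

/-! `F(P) ∪ F₀` is the complement of `V_{Ps \ P}`. A vertex `e` outside it lies on a propagator
`q ∈ Ps \ P` meeting no vertex of the set, so for independent `I` inside the set every `U ∋ e`
with `U ⊆ insert e I` sees `q` on top of the propagators seen by `U \ {e}`. Hall's condition
thus survives adding `e` to `I`, so `e` is not in the closure of the set. -/

lemma Matroid.isFlat_of_forall_insert_indep {α : Type*} {M : Matroid α} {F : Set α}
    (hF : F ⊆ M.E) (h : ∀ I ⊆ F, M.Indep I → ∀ e ∈ M.E \ F, M.Indep (insert e I)) :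
    M.IsFlat F := by
  refine ⟨fun I X hIF hIX x hxX ↦ by_contra fun hxF ↦ ?_, hF⟩
  have hdep : M.Dep (insert x I) := hIX.insert_dep ⟨hxX, fun hxI ↦ hxF (hIF.subset hxI)⟩
  exact hdep.not_indep (h I hIF.subset hIF.indep x ⟨hIX.subset_ground hxX, hxF⟩)

section WilsonLoop

variable {n : ℕ} [NeZero n]

lemma FP_union_compl_VP (Ps P : Set (Fin n × Fin n)) :
    FP n Ps P ∪ (univ \ VP n Ps) = univ \ VP n (Ps \ P) := by
  ext x
  simp only [FP, VP, mem_union, mem_sdiff, mem_univ, true_and, mem_iUnion, exists_prop]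
  grind

lemma propsOf_mono (Ps : Set (Fin n × Fin n)) {S T : Set (Fin n)} (hST : S ⊆ T) :
    propsOf n Ps S ⊆ propsOf n Ps T :=
  fun _ ⟨hp, hpS⟩ ↦ ⟨hp, hpS.mono (inter_subset_inter_right _ hST)⟩

lemma hall_insert_of_private_propagator {Ps : Set (Fin n × Fin n)} {I : Set (Fin n)}
    {e : Fin n} {q : Fin n × Fin n} (hq : q ∈ Ps) (heq : e ∈ Vp n q) (hqI : Disjoint (Vp n q) I)
    (hI : ∀ U ⊆ I, U.ncard ≤ (propsOf n Ps U).ncard) :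
    ∀ U ⊆ insert e I, U.ncard ≤ (propsOf n Ps U).ncard := by
  intro U hU
  have hU' : U \ {e} ⊆ I := sdiff_singleton_subset_iff.2 hU
  by_cases heU : e ∈ U
  swap
  · exact hI U (by simpa [heU] using hU')
  have hqU' : q ∉ propsOf n Ps (U \ {e}) := fun ⟨_, x, hxq, hxU⟩ ↦
    hqI.notMem_of_mem_left hxq (hU' hxU)
  have hsub : insert q (propsOf n Ps (U \ {e})) ⊆ propsOf n Ps U :=
    insert_subset ⟨hq, e, heq, heU⟩ (propsOf_mono Ps sdiff_subset)
  calc U.ncard = (U \ {e}).ncard + 1 := (ncard_sdiff_singleton_add_one heU).symm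
    _ ≤ (propsOf n Ps (U \ {e})).ncard + 1 := by gcongr; exact hI _ hU'
    _ = (insert q (propsOf n Ps (U \ {e}))).ncard := (ncard_insert_of_notMem hqU').symm
    _ ≤ (propsOf n Ps U).ncard := ncard_le_ncard hsub

end WilsonLoop

theorem propagator_flat_is_flat_general (n : ℕ) [NeZero n]
    (Ps : Set (Fin n × Fin n))
    (M : Matroid (Fin n)) (hME : M.E = Set.univ)
    (hMI : ∀ S : Set (Fin n), M.Indep S ↔ ∀ U ⊆ S, U.ncard ≤ (propsOf n Ps U).ncard)
    (P : Set (Fin n × Fin n)) :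
    M.IsFlat (FP n Ps P ∪ (Set.univ \ VP n Ps)) := by
  rw [FP_union_compl_VP]
  refine isFlat_of_forall_insert_indep (by simp [hME]) fun I hIF hI e he ↦ ?_
  have heQ : e ∈ VP n (Ps \ P) := by simpa using he.2
  obtain ⟨q, hq, heq⟩ : ∃ q ∈ Ps \ P, e ∈ Vp n q := by
    simpa only [VP, mem_iUnion, exists_prop] using heQ
  have hqI : Disjoint (Vp n q) I := disjoint_right.2 fun x hxI hxq ↦
    (hIF hxI).2 (mem_biUnion hq hxq)
  rw [hMI] at hI ⊢
  exact hall_insert_of_private_propagator hq.1 heq hqI hI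

/-- In the matroid `M(W)` of a well-defined Wilson loop diagram, for
every set of propagators `P ⊆ Ps` the set `F(P) ∪ F₀` is a flat, where
`F(P) = V_P \ V_{Ps \ P}` and `F₀ = Fin n \ V_Ps`. -/
theorem propagator_flat_is_flat (n : ℕ) [NeZero n]
    (Ps : Set (Fin n × Fin n)) (hW : WellDefinedWLD n Ps)
    (M : Matroid (Fin n)) (hME : M.E = Set.univ)
    (hMI : ∀ S : Set (Fin n), M.Indep S ↔ ∀ U ⊆ S, U.ncard ≤ (propsOf n Ps U).ncard)
    (P : Set (Fin n × Fin n)) (hP : P ⊆ Ps) :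
    M.IsFlat (FP n Ps P ∪ (Set.univ \ VP n Ps)) :=
  propagator_flat_is_flat_general n Ps M hME hMI P
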